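/- arXiv:1906.08581 — 6 statements merged into one kernel-verified Lean document; each statement's English description precedes it below -/
import Mathlib

section
/- Let Z be a Banach space, Y a closed subspace, and X a subspace complementary to Y (X ∩ Y = {0}) such that X ⊕ Y is closed in Z. Suppose there is a closed subspace X' of Z with X' + Y closed, X ⊆ X', and X' ∩ Y finite dimensional. Then X ⊕ (X' ∩ Y) is a closed subspace of Z. -/
theorem stmt_4_general {𝕜 Z : Type*} [RCLike 𝕜]
    [NormedAddCommGroup Z] [NormedSpace 𝕜 Z]
    (X X' Y : Submodule 𝕜 Z)
    (hX' : IsClosed (X' : Set Z))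
    (hXYcl : IsClosed ((X ⊔ Y : Submodule 𝕜 Z) : Set Z))
    (hXX' : X ≤ X') :
    IsClosed ((X ⊔ (X' ⊓ Y) : Submodule 𝕜 Z) : Set Z) := by
  -- modular law: since `X ≤ X'`, `X ⊔ (Y ⊓ X') = (X ⊔ Y) ⊓ X'`
  rw [inf_comm X' Y, ← sup_inf_assoc_of_le Y hXX', Submodule.coe_inf]
  exact hXYcl.inter hX'

/-- Lemma A.5: `Z` Banach, `Y` closed, `X ∩ Y = 0` with `X ⊕ Y` closed; if `X'` is a closed
subspace with `X' + Y` closed, `X ⊆ X'` and `X' ∩ Y` finite dimensional, then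
`X ⊕ (X' ∩ Y)` is closed. -/
theorem stmt_4 {𝕜 Z : Type*} [RCLike 𝕜]
    [NormedAddCommGroup Z] [NormedSpace 𝕜 Z] [CompleteSpace Z]
    (X X' Y : Submodule 𝕜 Z)
    (hY : IsClosed (Y : Set Z)) (hX' : IsClosed (X' : Set Z))
    (hXY : X ⊓ Y = ⊥)
    (hXYcl : IsClosed ((X ⊔ Y : Submodule 𝕜 Z) : Set Z))
    (hX'Ycl : IsClosed ((X' ⊔ Y : Submodule 𝕜 Z) : Set Z))
    (hXX' : X ≤ X')
    (hfin : FiniteDimensional 𝕜 ↥(X' ⊓ Y)) :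
    IsClosed ((X ⊔ (X' ⊓ Y) : Submodule 𝕜 Z) : Set Z) :=
  stmt_4_general X X' Y hX' hXYcl hXX'
end

section
/- Let (X, Y) be a Fredholm pair in a Banach space Z, i.e. X, Y are closed subspaces, X ∩ Y is finite dimensional, X + Y is closed, and Z/(X+Y) is finite dimensional. Suppose W ⊆ Z is a subspace that is itself a Banach space under a norm ‖·‖_W with ‖w‖_Z ≤ C‖w‖_W for all w ∈ W, and suppose Y ⊆ W. Then (X ∩ W, Y) is a Fredholm pair in W. -/
/-!
Pulling back along the embedding `j : W → Z` preserves closedness because `j` is bounded,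
hence continuous. Since `Y` lies in the range of `j`, the pullback of `X + Y` is the sum of the
pullbacks, and `X ∩ Y` pulls back injectively. Finally `j` induces an injection
`W ⧸ j⁻¹(X + Y) → Z ⧸ (X + Y)`, which bounds the codimension.
-/

namespace Submodule

section Ring

variable {R M M₂ : Type*} [Ring R] [AddCommGroup M] [AddCommGroup M₂] [Module R M] [Module R M₂]

theorem comap_sup_eq_of_le_range {f : M →ₗ[R] M₂} (p : Submodule R M₂) {q : Submodule R M₂}
    (hq : q ≤ LinearMap.range f) : (p ⊔ q).comap f = p.comap f ⊔ q.comap f := by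
  refine le_antisymm (fun w hw => ?_) (sup_le (comap_mono le_sup_left) (comap_mono le_sup_right))
  obtain ⟨x, hx, y, hy, hxy⟩ := mem_sup.mp (mem_comap.mp hw)
  obtain ⟨v, rfl⟩ := hq hy
  have hwv : f (w - v) = x := by rw [map_sub, ← hxy, add_sub_cancel_right]
  exact mem_sup.mpr ⟨w - v, by rwa [mem_comap, hwv], v, hy, sub_add_cancel w v⟩

theorem mapQ_comap_injective (f : M →ₗ[R] M₂) (q : Submodule R M₂) :
    Function.Injective ((q.comap f).mapQ q f le_rfl) := by
  rw [← LinearMap.ker_eq_bot, ker_mapQ, mkQ_map_self]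

end Ring

theorem finiteDimensional_quotient_comap {K V W : Type*} [DivisionRing K] [AddCommGroup V]
    [AddCommGroup W] [Module K V] [Module K W] (f : W →ₗ[K] V) (q : Submodule K V)
    [FiniteDimensional K (V ⧸ q)] : FiniteDimensional K (W ⧸ q.comap f) :=
  FiniteDimensional.of_injective _ (mapQ_comap_injective f q)

end Submodule

theorem stmt_5_general {𝕜 Z W : Type*} [RCLike 𝕜]
    [NormedAddCommGroup Z] [NormedSpace 𝕜 Z]
    [NormedAddCommGroup W] [NormedSpace 𝕜 W]
    (X Y : Submodule 𝕜 Z)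
    (hXcl : IsClosed (X : Set Z)) (hYcl : IsClosed (Y : Set Z))
    (hfin : FiniteDimensional 𝕜 ↥(X ⊓ Y))
    (hsumcl : IsClosed ((X ⊔ Y : Submodule 𝕜 Z) : Set Z))
    (hcofin : FiniteDimensional 𝕜 (Z ⧸ (X ⊔ Y)))
    (j : W →ₗ[𝕜] Z) (hj : Function.Injective j)
    (C : ℝ) (hbd : ∀ w : W, ‖j w‖ ≤ C * ‖w‖)
    (hYW : Y ≤ LinearMap.range j) :
    IsClosed ((X.comap j : Submodule 𝕜 W) : Set W) ∧
    IsClosed ((Y.comap j : Submodule 𝕜 W) : Set W) ∧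
    FiniteDimensional 𝕜 ↥(X.comap j ⊓ Y.comap j) ∧
    IsClosed ((X.comap j ⊔ Y.comap j : Submodule 𝕜 W) : Set W) ∧
    FiniteDimensional 𝕜 (W ⧸ (X.comap j ⊔ Y.comap j)) := by
  have hjc : Continuous j := (j.mkContinuous C hbd).continuous
  have hsup := Submodule.comap_sup_eq_of_le_range X hYW
  have : FiniteDimensional 𝕜 (LinearMap.ker j) := by
    rw [LinearMap.ker_eq_bot.mpr hj]
    infer_instance
  refine ⟨hXcl.preimage hjc, hYcl.preimage hjc, ?_, ?_, ?_⟩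
  · rw [← Submodule.comap_inf]
    infer_instance
  · rw [← hsup]
    exact hsumcl.preimage hjc
  · rw [← hsup]
    exact Submodule.finiteDimensional_quotient_comap j _

/-- Lemma A.6: let `(X, Y)` be a Fredholm pair in the Banach space `Z` and let `W` be a
Banach space continuously embedded in `Z` (embedding `j`) with `Y ⊆ W`.  Then
`(X ∩ W, Y)` is a Fredholm pair in `W` (subspaces of `W` are realised as preimages
under `j`). -/
theorem stmt_5 {𝕜 Z W : Type*} [RCLike 𝕜]
    [NormedAddCommGroup Z] [NormedSpace 𝕜 Z] [CompleteSpace Z]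
    [NormedAddCommGroup W] [NormedSpace 𝕜 W] [CompleteSpace W]
    (X Y : Submodule 𝕜 Z)
    (hXcl : IsClosed (X : Set Z)) (hYcl : IsClosed (Y : Set Z))
    (hfin : FiniteDimensional 𝕜 ↥(X ⊓ Y))
    (hsumcl : IsClosed ((X ⊔ Y : Submodule 𝕜 Z) : Set Z))
    (hcofin : FiniteDimensional 𝕜 (Z ⧸ (X ⊔ Y)))
    (j : W →ₗ[𝕜] Z) (hj : Function.Injective j)
    (C : ℝ) (hbd : ∀ w : W, ‖j w‖ ≤ C * ‖w‖)
    (hYW : Y ≤ LinearMap.range j) :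
    IsClosed ((X.comap j : Submodule 𝕜 W) : Set W) ∧
    IsClosed ((Y.comap j : Submodule 𝕜 W) : Set W) ∧
    FiniteDimensional 𝕜 ↥(X.comap j ⊓ Y.comap j) ∧
    IsClosed ((X.comap j ⊔ Y.comap j : Submodule 𝕜 W) : Set W) ∧
    FiniteDimensional 𝕜 (W ⧸ (X.comap j ⊔ Y.comap j)) :=
  stmt_5_general X Y hXcl hYcl hfin hsumcl hcofin j hj C hbd hYW
end

section
/- Let (X₁, Y) and (X₂, Y) be Fredholm pairs in a Banach space Z with X₁ ⊆ X₂ and ind(X₁, Y) = ind(X₂, Y), where the index of a Fredholm pair (X,Y) is dim(X ∩ Y) − dim(Z/(X+Y)). Then X₁ = X₂. -/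
/-!
Enlarging `X` can only increase `dim (X ∩ Y)` and decrease `codim (X + Y)`, so two pairs
`X₁ ≤ X₂` with the same index have `X₁ ∩ Y = X₂ ∩ Y` and `X₁ + Y = X₂ + Y`; in the modular
lattice of subspaces this forces `X₁ = X₂`.
-/

open Module

namespace Submodule

variable {K V : Type*} [DivisionRing K] [AddCommGroup V] [Module K V]

theorem finrank_quotient_add_finrank_map_mkQ {S T : Submodule K V} (hST : S ≤ T)
    [FiniteDimensional K (V ⧸ S)] :
    finrank K (V ⧸ T) + finrank K (T.map S.mkQ) = finrank K (V ⧸ S) := by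
  rw [← (quotientQuotientEquivQuotient S T hST).finrank_eq]
  exact finrank_quotient_add_finrank _

theorem finrank_quotient_le_of_le {S T : Submodule K V} (hST : S ≤ T)
    [FiniteDimensional K (V ⧸ S)] : finrank K (V ⧸ T) ≤ finrank K (V ⧸ S) :=
  (finrank_quotient_add_finrank_map_mkQ hST).le.trans' (Nat.le_add_right _ _)

theorem eq_of_le_of_finrank_quotient_eq {S T : Submodule K V} (hST : S ≤ T)
    [FiniteDimensional K (V ⧸ S)] (h : finrank K (V ⧸ T) = finrank K (V ⧸ S)) : S = T := by
  have hmap : finrank K (T.map S.mkQ) = 0 := by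
    have := finrank_quotient_add_finrank_map_mkQ hST
    omega
  rw [finrank_eq_zero, ← LinearMap.le_ker_iff_map, ker_mkQ] at hmap
  exact le_antisymm hST hmap

-- A junk value unless `X ⊓ Y` and `V ⧸ (X ⊔ Y)` are finite-dimensional.
noncomputable def pairIndex (X Y : Submodule K V) : ℤ :=
  finrank K ↥(X ⊓ Y) - finrank K (V ⧸ (X ⊔ Y))

theorem eq_of_le_of_pairIndex_eq {X₁ X₂ Y : Submodule K V} (hle : X₁ ≤ X₂)
    [FiniteDimensional K ↥(X₂ ⊓ Y)] [FiniteDimensional K (V ⧸ (X₁ ⊔ Y))]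
    (hind : pairIndex X₁ Y = pairIndex X₂ Y) : X₁ = X₂ := by
  have hinf_le : X₁ ⊓ Y ≤ X₂ ⊓ Y := inf_le_inf_right Y hle
  have hsup_le : X₁ ⊔ Y ≤ X₂ ⊔ Y := sup_le_sup_right hle Y
  have hdim := finrank_mono hinf_le
  have hcodim := finrank_quotient_le_of_le hsup_le
  unfold pairIndex at hind
  have hinf : X₁ ⊓ Y = X₂ ⊓ Y := eq_of_le_of_finrank_eq hinf_le (by omega)
  have hsup : X₁ ⊔ Y = X₂ ⊔ Y := eq_of_le_of_finrank_quotient_eq hsup_le (by omega)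
  exact eq_of_le_of_inf_le_of_sup_le hle hinf.ge hsup.ge

end Submodule

theorem stmt_6_general {𝕜 Z : Type*} [RCLike 𝕜]
    [NormedAddCommGroup Z] [NormedSpace 𝕜 Z]
    (X₁ X₂ Y : Submodule 𝕜 Z)
    (hfin₂ : FiniteDimensional 𝕜 ↥(X₂ ⊓ Y))
    (hcofin₁ : FiniteDimensional 𝕜 (Z ⧸ (X₁ ⊔ Y)))
    (hle : X₁ ≤ X₂)
    (hind : (Module.finrank 𝕜 ↥(X₁ ⊓ Y) : ℤ) - (Module.finrank 𝕜 (Z ⧸ (X₁ ⊔ Y)) : ℤ) =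
            (Module.finrank 𝕜 ↥(X₂ ⊓ Y) : ℤ) - (Module.finrank 𝕜 (Z ⧸ (X₂ ⊔ Y)) : ℤ)) :
    X₁ = X₂ :=
  Submodule.eq_of_le_of_pairIndex_eq hle hind

/-- Lemma A.7: if `(X₁, Y)` and `(X₂, Y)` are Fredholm pairs in the Banach space `Z` with
`X₁ ⊆ X₂` and equal index `dim(Xᵢ ∩ Y) − dim(Z/(Xᵢ + Y))`, then `X₁ = X₂`. -/
theorem stmt_6 {𝕜 Z : Type*} [RCLike 𝕜]
    [NormedAddCommGroup Z] [NormedSpace 𝕜 Z] [CompleteSpace Z]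
    (X₁ X₂ Y : Submodule 𝕜 Z)
    (hX₁ : IsClosed (X₁ : Set Z)) (hX₂ : IsClosed (X₂ : Set Z))
    (hY : IsClosed (Y : Set Z))
    (hfin₁ : FiniteDimensional 𝕜 ↥(X₁ ⊓ Y)) (hfin₂ : FiniteDimensional 𝕜 ↥(X₂ ⊓ Y))
    (hcl₁ : IsClosed ((X₁ ⊔ Y : Submodule 𝕜 Z) : Set Z))
    (hcl₂ : IsClosed ((X₂ ⊔ Y : Submodule 𝕜 Z) : Set Z))
    (hcofin₁ : FiniteDimensional 𝕜 (Z ⧸ (X₁ ⊔ Y)))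
    (hcofin₂ : FiniteDimensional 𝕜 (Z ⧸ (X₂ ⊔ Y)))
    (hle : X₁ ≤ X₂)
    (hind : (Module.finrank 𝕜 ↥(X₁ ⊓ Y) : ℤ) - (Module.finrank 𝕜 (Z ⧸ (X₁ ⊔ Y)) : ℤ) =
            (Module.finrank 𝕜 ↥(X₂ ⊓ Y) : ℤ) - (Module.finrank 𝕜 (Z ⧸ (X₂ ⊔ Y)) : ℤ)) :
    X₁ = X₂ :=
  stmt_6_general X₁ X₂ Y hfin₂ hcofin₁ hle hind
end

section
/- Let E be a finite-dimensional complex (or real) inner product space and P, Q : E → E linear projectors (P² = P, Q² = Q). Then P − Q is an isomorphism of E if and only if both restrictions P|_{ker Q} : ker Q → P(E) and P*|_{ker Q*} : ker Q* → P*(E) are isomorphisms. -/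
/-!
For idempotents, `P − Q` is injective iff `ker P ∩ ker Q = 0` and `P(E) ∩ Q(E) = 0`: if
`Px = Qx`, this vector is fixed by both projectors. Surjectivity of `P − Q` is injectivity of
`P* − Q*`, and `P*(E) = (ker P)ᗮ`, so `P − Q` is bijective iff `E = ker P ⊕ ker Q` and
`E = ker P* ⊕ ker Q*`. Finally `P` maps `ker Q` onto `P(E)` iff `ker Q + ker P = E`, and
injectively iff `ker Q ∩ ker P = 0`.
-/

open LinearMap Submodule

theorem LinearMap.ker_sub_eq_bot_iff_of_isIdempotentElem {R M : Type*} [Ring R] [AddCommGroup M]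
    [Module R M] {P Q : Module.End R M} (hP : IsIdempotentElem P) (hQ : IsIdempotentElem Q) :
    ker (P - Q) = ⊥ ↔ Disjoint (ker P) (ker Q) ∧ Disjoint (range P) (range Q) := by
  simp only [ker_eq_bot', disjoint_def, mem_ker, hP.mem_range_iff, hQ.mem_range_iff, sub_apply,
    sub_eq_zero]
  refine ⟨fun h ↦ ⟨fun x hPx hQx ↦ h x (by rw [hPx, hQx]), fun x hPx hQx ↦ h x (by rw [hPx, hQx])⟩,
    fun ⟨hker, hrange⟩ x hx ↦ ?_⟩
  have hPx : P x = 0 := hrange (P x) (congr($hP x)) (by rw [hx]; exact congr($hQ x))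
  exact hker x hPx (hx ▸ hPx)

section InnerProduct

variable {𝕜 E F : Type*} [RCLike 𝕜] [NormedAddCommGroup E] [InnerProductSpace 𝕜 E]
  [FiniteDimensional 𝕜 E] [NormedAddCommGroup F] [InnerProductSpace 𝕜 F] [FiniteDimensional 𝕜 F]

theorem Submodule.disjoint_orthogonal_iff_codisjoint {K L : Submodule 𝕜 E} :
    Disjoint Kᗮ Lᗮ ↔ Codisjoint K L := by
  rw [disjoint_iff, inf_orthogonal, orthogonal_eq_bot_iff, codisjoint_iff]

theorem LinearMap.disjoint_range_adjoint_iff (A B : E →ₗ[𝕜] F) :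
    Disjoint (range (adjoint A)) (range (adjoint B)) ↔ Codisjoint (ker A) (ker B) := by
  rw [← orthogonal_ker, ← orthogonal_ker, disjoint_orthogonal_iff_codisjoint]

theorem LinearMap.surjective_iff_injective_adjoint (A : E →ₗ[𝕜] F) :
    Function.Surjective A ↔ Function.Injective (adjoint A) := by
  rw [← range_eq_top, ← ker_eq_bot, ← orthogonal_range, orthogonal_eq_bot_iff]

theorem LinearMap.bijective_sub_iff_isCompl_ker_of_isIdempotentElem
    {P Q : E →ₗ[𝕜] E} (hP : IsIdempotentElem P) (hQ : IsIdempotentElem Q) :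
    Function.Bijective (P - Q) ↔
      IsCompl (ker P) (ker Q) ∧ IsCompl (ker (adjoint P)) (ker (adjoint Q)) := by
  have hPa : IsIdempotentElem (adjoint P) := IsIdempotentElem.star_iff.mpr hP
  have hQa : IsIdempotentElem (adjoint Q) := IsIdempotentElem.star_iff.mpr hQ
  have hrange := disjoint_range_adjoint_iff (adjoint P) (adjoint Q)
  simp only [adjoint_adjoint] at hrange
  rw [Function.Bijective, surjective_iff_injective_adjoint, map_sub, ← ker_eq_bot, ← ker_eq_bot,
    ker_sub_eq_bot_iff_of_isIdempotentElem hP hQ, ker_sub_eq_bot_iff_of_isIdempotentElem hPa hQa,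
    hrange, disjoint_range_adjoint_iff, isCompl_iff, isCompl_iff]
  tauto

end InnerProduct

/-- Lemma A.9, (i) ⇔ (ii): for projectors `P, Q` on a finite-dimensional inner product
space `E`, `P − Q` is an isomorphism iff both `P|_{ker Q} : ker Q → P(E)` and
`P*|_{ker Q*} : ker Q* → P*(E)` are isomorphisms. -/
theorem stmt_9 {E : Type*} [NormedAddCommGroup E] [InnerProductSpace ℂ E]
    [FiniteDimensional ℂ E]
    (P Q : E →ₗ[ℂ] E) (hP : P ∘ₗ P = P) (hQ : Q ∘ₗ Q = Q) :
    Function.Bijective (P - Q) ↔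
      ((Submodule.map P (LinearMap.ker Q) = LinearMap.range P ∧
          LinearMap.ker Q ⊓ LinearMap.ker P = ⊥) ∧
        (Submodule.map (LinearMap.adjoint P) (LinearMap.ker (LinearMap.adjoint Q)) =
            LinearMap.range (LinearMap.adjoint P) ∧
          LinearMap.ker (LinearMap.adjoint Q) ⊓ LinearMap.ker (LinearMap.adjoint P) = ⊥)) := by
  rw [bijective_sub_iff_isCompl_ker_of_isIdempotentElem hP hQ, map_eq_range_iff, map_eq_range_iff,
    ← disjoint_iff, ← disjoint_iff, isCompl_comm (x := ker P), isCompl_comm (x := ker (adjoint P)),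
    isCompl_iff, isCompl_iff, and_comm (a := Codisjoint _ _), and_comm (a := Codisjoint _ _)]
end

section
/- Let E be a finite-dimensional inner product space and P, Q : E → E projectors. Then P − Q is an isomorphism if and only if P|_{ker Q} : ker Q → P(E) and (1 − P)|_{Q(E)} : Q(E) → ker P are isomorphisms. -/
/-- Lemma A.9, (i) ⇔ (iii): for projectors `P, Q` on a finite-dimensional inner product
space `E`, `P − Q` is an isomorphism iff both `P|_{ker Q} : ker Q → P(E)` and
`(1 − P)|_{Q(E)} : Q(E) → ker P` are isomorphisms. -/
theorem stmt_10 {E : Type*} [NormedAddCommGroup E] [InnerProductSpace ℂ E]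
    [FiniteDimensional ℂ E]
    (P Q : E →ₗ[ℂ] E) (hP : P ∘ₗ P = P) (hQ : Q ∘ₗ Q = Q) :
    Function.Bijective (P - Q) ↔
      ((Submodule.map P (LinearMap.ker Q) = LinearMap.range P ∧
          LinearMap.ker Q ⊓ LinearMap.ker P = ⊥) ∧
        (Submodule.map ((LinearMap.id : E →ₗ[ℂ] E) - P) (LinearMap.range Q) =
            LinearMap.ker P ∧
          LinearMap.range Q ⊓ LinearMap.ker ((LinearMap.id : E →ₗ[ℂ] E) - P) = ⊥)) := by
  have hPP : ∀ x, P (P x) = P x := fun x => LinearMap.ext_iff.mp hP x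
  have hQQ : ∀ x, Q (Q x) = Q x := fun x => LinearMap.ext_iff.mp hQ x
  constructor
  · rintro ⟨hinj, hsurj⟩
    refine ⟨⟨?_, ?_⟩, ?_, ?_⟩
    · apply le_antisymm
      · rintro y ⟨z, -, rfl⟩; exact ⟨z, rfl⟩
      · rintro y ⟨z, rfl⟩
        obtain ⟨x, hx⟩ := hsurj (P z)
        simp only [LinearMap.sub_apply] at hx
        refine ⟨x - Q x, ?_, ?_⟩
        · simp [LinearMap.mem_ker, hQQ]
        · have h2 := congrArg P hx
          simp only [map_sub, hPP] at h2
          simpa [map_sub] using h2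
    · apply le_antisymm
      · rintro x ⟨hx1, hx2⟩
        simp only [SetLike.mem_coe, LinearMap.mem_ker] at hx1 hx2
        have : (P - Q) x = 0 := by simp [LinearMap.sub_apply, hx1, hx2]
        have := hinj (show (P - Q) x = (P - Q) 0 by rw [map_zero]; exact this)
        simpa using this
      · exact bot_le
    · apply le_antisymm
      · rintro y ⟨z, ⟨w, rfl⟩, rfl⟩
        simp [LinearMap.mem_ker, map_sub, hPP]
      · rintro y hy
        simp only [LinearMap.mem_ker] at hy
        obtain ⟨x, hx⟩ := hsurj y
        simp only [LinearMap.sub_apply] at hx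
        refine ⟨-Q x, ⟨-x, by simp⟩, ?_⟩
        have := congrArg (fun v => v - P v) hx
        simp only [map_sub, hPP, hy, sub_zero, sub_sub_sub_cancel_left] at this
        simpa [map_neg, sub_eq_iff_eq_add] using this
    · apply le_antisymm
      · rintro x ⟨⟨z, rfl⟩, hx2⟩
        simp only [SetLike.mem_coe, LinearMap.mem_ker, LinearMap.sub_apply,
          LinearMap.id_apply, sub_eq_zero] at hx2
        have h1 : (P - Q) (Q z) = 0 := by
          simp [LinearMap.sub_apply, hQQ, ← hx2]
        have := hinj (show (P - Q) (Q z) = (P - Q) 0 by rw [map_zero]; exact h1)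
        simpa using this
      · exact bot_le
  · rintro ⟨⟨hmapP, hkerP⟩, hmap1P, hker1P⟩
    have hinj : Function.Injective (P - Q) := by
      rw [← LinearMap.ker_eq_bot]
      rw [LinearMap.ker_eq_bot']
      intro x hx
      simp only [LinearMap.sub_apply, sub_eq_zero] at hx
      -- hx : P x = Q x
      set a := Q x with ha
      have hQa : Q a = a := hQQ x
      have hPa : P x = a := hx
      have hv : P (x - a) = a - P a := by simp [map_sub, hPa]
      have hvrange : P (x - a) ∈ LinearMap.range P := ⟨x - a, rfl⟩
      have hvker : P (P (x - a)) = 0 := by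
        rw [hv]; simp [map_sub, hPP]
      have hv0 : P (x - a) = 0 := by
        have := hPP (x - a)
        rw [hvker] at this; exact this.symm
      have hxa : x - a = 0 := by
        have hmem : x - a ∈ LinearMap.ker Q ⊓ LinearMap.ker P := by
          refine ⟨?_, ?_⟩
          · simp [LinearMap.mem_ker, map_sub, hQa, ha, hQQ]
          · simpa [LinearMap.mem_ker] using hv0
        rw [hkerP] at hmem
        simpa using hmem
      have hxeq : x = a := by linear_combination (norm := abel) hxa
      have ha0 : a = 0 := by
        have hmem : a ∈ LinearMap.range Q ⊓
            LinearMap.ker ((LinearMap.id : E →ₗ[ℂ] E) - P) := by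
          refine ⟨⟨x, rfl⟩, ?_⟩
          have : P a = a := by rw [← hxeq]; rw [hPa, hxeq]
          simp [LinearMap.mem_ker, this]
        rw [hker1P] at hmem
        simpa using hmem
      rw [hxeq, ha0]
    exact ⟨hinj, LinearMap.injective_iff_surjective.mp hinj⟩
end

section
/- Let T : dom(T) ⊆ H → H be a closed densely defined operator on a Hilbert space with spec(T) discrete, and suppose for some R > 0 and ω ∈ [0, π/2): spec(T) ⊆ closure(S_ω) ∪ B_R (where S_ω is the open bisector of angle ω and B_R the closed ball of radius R) and ‖(T − ζ)⁻¹‖ ≤ C/|ζ| for ζ ∉ S_ω ∪ B_R. Then for every r ∈ ℝ with the vertical line {Re ζ = r} disjoint from spec(T), the shifted operator T − r is invertible and ω'-bisectorial for some ω' ∈ (0, π/2): there is ε > 0 with spec(T − r) ⊆ closure(S_{ω'}) \ {|Re ζ| ≤ ε}, and for each μ > ω' there is C_μ with ‖(ζ − (T − r))⁻¹‖ ≤ C_μ/|ζ| for ζ ∉ closure(S_μ). -/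
open Real

/-- `R` is a (two-sided) resolvent for the unbounded operator `T` at `ζ`, i.e.
`R = (T − ζ)⁻¹` as a bounded operator. -/
def IsResolventAt {H : Type*} [NormedAddCommGroup H] [InnerProductSpace ℂ H]
    (T : H →ₗ.[ℂ] H) (ζ : ℂ) (R : H →L[ℂ] H) : Prop :=
  (∀ u : T.domain, R (T u - ζ • (u : H)) = u) ∧
  (∀ v : H, (R v, v + ζ • R v) ∈ T.graph)

/-- The open bisector of angle `ω` around the real axis. -/
def Bisector (ω : ℝ) : Set ℂ :=
  {z : ℂ | z ≠ 0 ∧ (|Complex.arg z| < ω ∨ |Complex.arg (-z)| < ω)}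


/-- Characterization of membership in the bisector in terms of re/im. -/
lemma arg_abs_lt_iff {θ : ℝ} (hθ1 : 0 ≤ θ) (hθ2 : θ < π / 2) {z : ℂ} (hz : 0 < z.re) :
    |Complex.arg z| < θ ↔ |z.im| < Real.tan θ * z.re := by
  have harg : |Complex.arg z| < π / 2 :=
    Complex.abs_arg_lt_pi_div_two_iff.mpr (Or.inl hz)
  have hargeq : Complex.arg z = Real.arctan (z.im / z.re) := by
    have h1 := Complex.tan_arg z
    have h2 := abs_lt.mp harg
    rw [← h1, Real.arctan_tan h2.1 h2.2]
  constructor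
  · intro h
    have h1 := abs_lt.mp h
    rw [hargeq] at h1
    have h2 : z.im / z.re < Real.tan θ := by
      have := Real.tan_lt_tan_of_lt_of_lt_pi_div_two
        (Real.neg_pi_div_two_lt_arctan _) hθ2 h1.2
      rwa [Real.tan_arctan] at this
    have h3 : -Real.tan θ < z.im / z.re := by
      have := Real.tan_lt_tan_of_lt_of_lt_pi_div_two
        (show -(π/2) < -θ by linarith [Real.pi_pos])
        (Real.arctan_lt_pi_div_two _) h1.1
      rwa [Real.tan_arctan, Real.tan_neg] at this
    have h4 : |z.im / z.re| < Real.tan θ := abs_lt.mpr ⟨h3, h2⟩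
    rw [abs_div, abs_of_pos hz, div_lt_iff₀ hz] at h4
    linarith
  · intro h
    have h0 : |z.im / z.re| < Real.tan θ := by
      rw [abs_div, abs_of_pos hz, div_lt_iff₀ hz]
      linarith
    rw [hargeq, abs_lt]
    constructor
    · have := Real.arctan_strictMono (abs_lt.mp h0).1
      rwa [← Real.tan_neg, Real.arctan_tan (by linarith [Real.pi_pos]) (by linarith [Real.pi_pos])] at this
    · have := Real.arctan_strictMono (abs_lt.mp h0).2
      rwa [Real.arctan_tan (by linarith [Real.pi_pos]) hθ2] at this

lemma bisector_eq {θ : ℝ} (hθ1 : 0 ≤ θ) (hθ2 : θ < π / 2) :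
    Bisector θ = {z : ℂ | z.re ≠ 0 ∧ |z.im| < Real.tan θ * |z.re|} := by
  ext z
  constructor
  · rintro ⟨hz0, h | h⟩
    · have hre : 0 < z.re := by
        rcases Complex.abs_arg_lt_pi_div_two_iff.mp (h.trans hθ2) with h' | h'
        · exact h'
        · exact absurd h' hz0
      have := (arg_abs_lt_iff hθ1 hθ2 hre).mp h
      exact ⟨hre.ne', by rwa [abs_of_pos hre]⟩
    · have hz0' : -z ≠ 0 := neg_ne_zero.mpr hz0
      have hre : 0 < (-z).re := by
        rcases Complex.abs_arg_lt_pi_div_two_iff.mp (h.trans hθ2) with h' | h'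
        · exact h'
        · exact absurd h' hz0'
      have h2 := (arg_abs_lt_iff hθ1 hθ2 hre).mp h
      have hre' : z.re < 0 := by
        simpa [Complex.neg_re, neg_pos] using hre
      refine ⟨hre'.ne, ?_⟩
      rw [abs_of_neg hre']
      simpa [Complex.neg_im, abs_neg, Complex.neg_re] using h2
  · rintro ⟨hre, him⟩
    have hz0 : z ≠ 0 := fun h => hre (by simp [h])
    rcases hre.lt_or_gt with h | h
    · refine ⟨hz0, Or.inr ?_⟩
      have hre' : 0 < (-z).re := by simpa [Complex.neg_re, neg_pos] using h
      refine (arg_abs_lt_iff hθ1 hθ2 hre').mpr ?_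
      rw [abs_of_neg h] at him
      simpa [Complex.neg_im, abs_neg, Complex.neg_re] using him
    · refine ⟨hz0, Or.inl ?_⟩
      refine (arg_abs_lt_iff hθ1 hθ2 h).mpr ?_
      rwa [abs_of_pos h] at him

lemma bisector_isOpen {θ : ℝ} (hθ1 : 0 ≤ θ) (hθ2 : θ < π / 2) :
    IsOpen (Bisector θ) := by
  rw [bisector_eq hθ1 hθ2]
  apply IsOpen.inter
  · exact isOpen_compl_singleton.preimage Complex.continuous_re
  · exact isOpen_lt (continuous_abs.comp Complex.continuous_im)
      (continuous_const.mul (continuous_abs.comp Complex.continuous_re))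

lemma closure_bisector_subset {θ : ℝ} (hθ1 : 0 ≤ θ) (hθ2 : θ < π / 2) :
    closure (Bisector θ) ⊆ {z : ℂ | |z.im| ≤ Real.tan θ * |z.re|} := by
  apply closure_minimal
  · rw [bisector_eq hθ1 hθ2]
    exact fun z hz => hz.2.le
  · exact isClosed_le (continuous_abs.comp Complex.continuous_im)
      (continuous_const.mul (continuous_abs.comp Complex.continuous_re))

lemma mem_closure_bisector {θ : ℝ} (hθ1 : 0 < θ) (hθ2 : θ < π / 2) {z : ℂ}
    (h : |z.im| ≤ Real.tan θ * |z.re|) : z ∈ closure (Bisector θ) := by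
  have htan : 0 < Real.tan θ := Real.tan_pos_of_pos_of_lt_pi_div_two hθ1 hθ2
  set s : ℝ := if 0 ≤ z.re then 1 else -1 with hs
  have hseq : ∀ n : ℕ, z + ((1 / (n + 1) * s : ℝ) : ℂ) ∈ Bisector θ := by
    intro n
    rw [bisector_eq hθ1.le hθ2]
    have hn : (0 : ℝ) < 1 / (n + 1) := by positivity
    have hre : (z + ((1 / (n + 1) * s : ℝ) : ℂ)).re = z.re + 1 / (n + 1) * s := by
      rw [Complex.add_re, Complex.ofReal_re]
    have him : (z + ((1 / (n + 1) * s : ℝ) : ℂ)).im = z.im := by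
      rw [Complex.add_im, Complex.ofReal_im, add_zero]
    have hkey : |z.re| + 1 / (n + 1) ≤ |z.re + 1 / (n + 1) * s| := by
      rcases le_or_gt 0 z.re with hc | hc
      · rw [hs, if_pos hc, mul_one, abs_of_nonneg hc,
          abs_of_nonneg (by linarith)]
      · rw [hs, if_neg (not_le.mpr hc), mul_neg_one, abs_of_neg hc,
          abs_of_neg (by linarith)]
        ring_nf
        linarith
    constructor
    · rw [hre]
      intro hc
      rw [hc] at hkey
      simp only [abs_zero] at hkey
      have := abs_nonneg z.re
      linarith
    · rw [hre, him]
      calc |z.im| ≤ Real.tan θ * |z.re| := h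
        _ < Real.tan θ * (|z.re| + 1 / (n + 1)) := by nlinarith
        _ ≤ Real.tan θ * |z.re + 1 / (n + 1) * s| := by nlinarith
  refine mem_closure_of_tendsto (b := (Filter.atTop : Filter ℕ)) (f := fun n : ℕ => z + ((1 / (n + 1) * s : ℝ) : ℂ))
    ?_ (Filter.Eventually.of_forall hseq)
  have h1 : Filter.Tendsto (fun n : ℕ => (1 / (n + 1) * s : ℝ)) Filter.atTop (nhds 0) := by
    have := tendsto_one_div_add_atTop_nhds_zero_nat (𝕜 := ℝ)
    simpa using this.mul_const s
  have h2 : Filter.Tendsto (fun n : ℕ => ((1 / (n + 1) * s : ℝ) : ℂ)) Filter.atTop (nhds 0) := by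
    have h3 := (Complex.continuous_ofReal.tendsto 0).comp h1
    simp only [Complex.ofReal_zero] at h3
    exact h3.congr (fun n => by simp)
  simpa using (tendsto_const_nhds (x := z)).add h2

lemma resolvent_perturb {H : Type*} [NormedAddCommGroup H] [InnerProductSpace ℂ H]
    [CompleteSpace H] {T : H →ₗ.[ℂ] H} {ζ ζ' : ℂ} {R : H →L[ℂ] H}
    (h : IsResolventAt T ζ R) (hs : ‖ζ' - ζ‖ * ‖R‖ ≤ 1 / 2) :
    ∃ R', IsResolventAt T ζ' R' ∧ ‖R'‖ ≤ 2 * ‖R‖ := by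
  set t : H →L[ℂ] H := (ζ' - ζ) • R with ht
  have htn : ‖t‖ ≤ 1 / 2 := by
    rw [ht, norm_smul]
    exact hs
  have htn1 : ‖t‖ < 1 := lt_of_le_of_lt htn (by norm_num)
  set u : (H →L[ℂ] H)ˣ := Units.oneSub t htn1 with hu
  set S : H →L[ℂ] H := ↑u⁻¹ with hS
  have huval : (u : H →L[ℂ] H) = 1 - t := rfl
  have hS1 : S * (1 - t) = 1 := by rw [hS, ← huval]; exact u.inv_mul
  have hS2 : (1 - t) * S = 1 := by rw [hS, ← huval]; exact u.mul_inv
  have hc : R * (1 - t) = (1 - t) * R := by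
    rw [mul_sub, sub_mul, mul_one, one_mul, ht, mul_smul_comm, smul_mul_assoc]
  have hcomm : R * S = S * R := by
    calc R * S = S * (1 - t) * (R * S) := by rw [hS1, one_mul]
      _ = S * ((1 - t) * R * S) := by rw [mul_assoc, ← mul_assoc (1 - t)]
      _ = S * (R * (1 - t) * S) := by rw [hc]
      _ = S * R := by rw [mul_assoc R, hS2, mul_one]
  have hSrep : S = 1 + t * S := by
    have h1 := hS2
    rw [sub_mul, one_mul, sub_eq_iff_eq_add'] at h1
    exact h1.trans (add_comm _ _)
  have hSn : ‖S‖ ≤ 2 := by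
    have h1 : ‖S‖ ≤ ‖(1 : H →L[ℂ] H)‖ + ‖t‖ * ‖S‖ := by
      calc ‖S‖ = ‖1 + t * S‖ := by rw [← hSrep]
        _ ≤ ‖(1 : H →L[ℂ] H)‖ + ‖t * S‖ := norm_add_le _ _
        _ ≤ ‖(1 : H →L[ℂ] H)‖ + ‖t‖ * ‖S‖ := by
            gcongr
            exact norm_mul_le _ _
    have h2 : ‖(1 : H →L[ℂ] H)‖ ≤ 1 := ContinuousLinearMap.norm_id_le
    have h3 : ‖t‖ * ‖S‖ ≤ 1 / 2 * ‖S‖ :=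
      mul_le_mul_of_nonneg_right htn (norm_nonneg _)
    have h4 := norm_nonneg S
    linarith
  refine ⟨S * R, ⟨?_, ?_⟩, ?_⟩
  · intro v
    have e1 : (T v : H) - ζ' • (v : H) = ((T v : H) - ζ • (v : H)) - (ζ' - ζ) • (v : H) := by
      rw [sub_smul]; abel
    have e2 : R ((T v : H) - ζ' • (v : H)) = (1 - t) (v : H) := by
      rw [e1, map_sub, h.1 v, map_smul]
      simp [ht, ContinuousLinearMap.sub_apply, ContinuousLinearMap.one_apply,
        ContinuousLinearMap.smul_apply]
    rw [ContinuousLinearMap.mul_apply, e2, ← ContinuousLinearMap.mul_apply, hS1,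
      ContinuousLinearMap.one_apply]
  · intro v
    have hw := h.2 (S v)
    have hw1 : R (S v) = (S * R) v := by
      rw [← ContinuousLinearMap.mul_apply, hcomm]
    have hveq : (v : H) = S v - (ζ' - ζ) • R (S v) := by
      have h1 : ((1 - t) * S) v = v := by rw [hS2, ContinuousLinearMap.one_apply]
      have h2 : ((1 - t) * S) v = S v - (ζ' - ζ) • R (S v) := by
        simp [ContinuousLinearMap.mul_apply, ContinuousLinearMap.sub_apply,
          ContinuousLinearMap.one_apply, ht, ContinuousLinearMap.smul_apply]
      rw [← h2, h1]
    have hw2 : S v + ζ • R (S v) = v + ζ' • R (S v) := by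
      calc S v + ζ • R (S v)
          = (S v - (ζ' - ζ) • R (S v)) + ζ' • R (S v) := by rw [sub_smul]; abel
        _ = v + ζ' • R (S v) := by rw [← hveq]
    rw [← hw1, ← hw2]
    exact hw
  · calc ‖S * R‖ ≤ ‖S‖ * ‖R‖ := norm_mul_le _ _
      _ ≤ 2 * ‖R‖ := mul_le_mul_of_nonneg_right hSn (norm_nonneg _)

lemma compact_bound {H : Type*} [NormedAddCommGroup H] [InnerProductSpace ℂ H]
    [CompleteSpace H] (T : H →ₗ.[ℂ] H) (r : ℂ) (K : Set ℂ) (hK : IsCompact K)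
    (hex : ∀ z ∈ K, ∃ R, IsResolventAt T (z + r) R) :
    ∃ M : ℝ, ∀ z ∈ K, ∃ R, IsResolventAt T (z + r) R ∧ ‖R‖ ≤ M := by
  classical
  set g : ℂ → (H →L[ℂ] H) := fun z =>
    if h : ∃ R, IsResolventAt T (z + r) R then h.choose else 0 with hg
  have hgspec : ∀ z ∈ K, IsResolventAt T (z + r) (g z) := by
    intro z hz
    have h := hex z hz
    rw [hg]
    simp only [dif_pos h]
    exact h.choose_spec
  set U : ℂ → Set ℂ := fun z => Metric.ball z (1 / (2 * (‖g z‖ + 1))) with hU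
  have hUnhds : ∀ z ∈ K, U z ∈ nhds z := by
    intro z _
    apply Metric.ball_mem_nhds
    positivity
  obtain ⟨F, hFK, hcover⟩ := hK.elim_nhds_subcover U hUnhds
  obtain ⟨M, hM⟩ := ((F.finite_toSet).image (fun z => 2 * ‖g z‖)).bddAbove
  refine ⟨M, fun z hz => ?_⟩
  obtain ⟨x, hxF, hxz⟩ := Set.mem_iUnion₂.mp (hcover hz)
  have hxK : x ∈ K := hFK x hxF
  have hRx := hgspec x hxK
  have hdist : ‖(z + r) - (x + r)‖ * ‖g x‖ ≤ 1 / 2 := by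
    have h1 : ‖(z + r) - (x + r)‖ = ‖z - x‖ := by ring_nf
    have h2 : ‖z - x‖ ≤ 1 / (2 * (‖g x‖ + 1)) := by
      rw [← dist_eq_norm]
      exact (Metric.mem_ball.mp hxz).le
    have h3 : (0:ℝ) < ‖g x‖ + 1 := by positivity
    rw [h1]
    calc ‖z - x‖ * ‖g x‖ ≤ 1 / (2 * (‖g x‖ + 1)) * ‖g x‖ :=
          mul_le_mul_of_nonneg_right h2 (norm_nonneg _)
      _ ≤ 1 / 2 := by
          rw [div_mul_eq_mul_div, div_le_div_iff₀ (by positivity) (by norm_num)]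
          nlinarith [norm_nonneg (g x)]
  obtain ⟨R', hR', hR'n⟩ := resolvent_perturb hRx hdist
  refine ⟨R', hR', hR'n.trans ?_⟩
  exact hM ⟨x, hxF, rfl⟩

/-- Proposition on bisectoriality of `A_r`: if `T` is closed, densely defined, has
discrete spectrum contained in `closure(S_ω) ∪ B_R` with resolvent bound `C/|ζ|`
outside `S_ω ∪ B_R`, then for every admissible spectral cut `r` (vertical line
`Re ζ = r` in the resolvent set) the operator `T − r` is invertible and
`ω'`-bisectorial: its spectrum lies in `closure(S_{ω'})` minus the strip `|Re| ≤ ε`,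
and for every `μ > ω'` one has `‖(ζ − (T − r))⁻¹‖ ≤ C_μ/|ζ|` outside `closure(S_μ)`. -/
theorem stmt_19 {H : Type*} [NormedAddCommGroup H] [InnerProductSpace ℂ H]
    [CompleteSpace H]
    (T : H →ₗ.[ℂ] H) (hdense : Dense (T.domain : Set H))
    (hclosed : IsClosed ((T.graph : Submodule ℂ (H × H)) : Set (H × H)))
    (R₀ : ℝ) (hR₀ : 0 < R₀) (ω : ℝ) (hω : ω ∈ Set.Ico 0 (π / 2))
    (hspec : ∀ ζ : ℂ, (¬ ∃ R, IsResolventAt T ζ R) →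
      ζ ∈ closure (Bisector ω) ∪ Metric.closedBall 0 R₀)
    (C : ℝ)
    (hres : ∀ ζ : ℂ, ζ ∉ Bisector ω ∪ Metric.closedBall 0 R₀ →
      ∀ R, IsResolventAt T ζ R → ‖R‖ ≤ C / ‖ζ‖)
    (hdisc : ∀ K : Set ℂ, IsCompact K →
      {ζ ∈ K | ¬ ∃ R, IsResolventAt T ζ R}.Finite)
    (r : ℝ) (hline : ∀ ζ : ℂ, ζ.re = r → ∃ R, IsResolventAt T ζ R) :
    (∃ R, IsResolventAt T (r : ℂ) R) ∧
    ∃ ω' ∈ Set.Ioo (0 : ℝ) (π / 2), ∃ ε > (0 : ℝ),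
      (∀ ζ : ℂ, (¬ ∃ R, IsResolventAt T ζ R) →
        (ζ - (r : ℂ)) ∈ closure (Bisector ω') ∧ ε < |(ζ - (r : ℂ)).re|) ∧
      ∀ μ ∈ Set.Ioo ω' (π / 2), ∃ Cμ : ℝ,
        ∀ ζ : ℂ, ζ ∉ closure (Bisector μ) →
          ∃ R, IsResolventAt T (ζ + (r : ℂ)) R ∧ ‖R‖ ≤ Cμ / ‖ζ‖ := by
  classical
  obtain ⟨hω0, hω2⟩ := hω
  have hπ := Real.pi_pos
  have htanω : 0 ≤ Real.tan ω :=
    Real.tan_nonneg_of_nonneg_of_le_pi_div_two hω0 hω2.le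
  -- bound on imaginary parts of spectral points
  have hspecIm : ∀ z : ℂ, (¬ ∃ R, IsResolventAt T z R) →
      |z.im| ≤ Real.tan ω * |z.re| + R₀ := by
    intro z hz
    rcases hspec z hz with h | h
    · have h2 : |z.im| ≤ Real.tan ω * |z.re| := closure_bisector_subset hω0 hω2 h
      linarith
    · have h2 : ‖z‖ ≤ R₀ := by rwa [Metric.mem_closedBall, dist_zero_right] at h
      have h3 : |z.im| ≤ ‖z‖ := by
        exact Complex.abs_im_le_norm z
      have h4 : 0 ≤ Real.tan ω * |z.re| := mul_nonneg htanω (abs_nonneg _)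
      linarith
  -- the strip |Re ζ - r| ≤ ε is free of spectrum
  have hstripex : ∃ ε : ℝ, 0 < ε ∧
      ∀ z : ℂ, (¬ ∃ R, IsResolventAt T z R) → ε < |z.re - r| := by
    set ρ : ℝ := |r| + 1 + (Real.tan ω * (|r| + 1) + R₀) with hρ
    set Fset : Set ℂ :=
      {ζ ∈ Metric.closedBall (0 : ℂ) ρ | ¬ ∃ R, IsResolventAt T ζ R} with hFset
    have hFfin : Fset.Finite := hdisc _ (isCompact_closedBall 0 ρ)
    set Sset : Set ℝ := insert (1 : ℝ) ((fun z : ℂ => |z.re - r|) '' Fset) with hSset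
    have hSfin : Sset.Finite := (hFfin.image _).insert 1
    have hSne : (hSfin.toFinset).Nonempty :=
      ⟨1, by rw [Set.Finite.mem_toFinset]; exact Set.mem_insert 1 _⟩
    set δ : ℝ := hSfin.toFinset.min' hSne with hδ
    have hSpos : ∀ x ∈ Sset, 0 < x := by
      intro x hx
      rcases Set.mem_insert_iff.mp hx with rfl | hx'
      · norm_num
      · obtain ⟨z, hzF, rfl⟩ := hx'
        have hzr : z.re ≠ r := by
          intro h
          exact hzF.2 (hline z h)
        exact abs_pos.mpr (sub_ne_zero.mpr hzr)
    have hδpos : 0 < δ := by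
      apply hSpos
      have := Finset.min'_mem hSfin.toFinset hSne
      rwa [Set.Finite.mem_toFinset] at this
    have hδ1 : δ ≤ 1 := Finset.min'_le _ _ (by
      rw [Set.Finite.mem_toFinset]; exact Set.mem_insert 1 _)
    refine ⟨δ / 2, by positivity, ?_⟩
    intro z hz
    by_contra hc
    push_neg at hc
    have h1 : |z.re| ≤ |r| + 1 := by
      have := abs_sub_abs_le_abs_sub z.re r
      linarith
    have h2 : |z.im| ≤ Real.tan ω * (|r| + 1) + R₀ := by
      have ha := hspecIm z hz
      have hb : Real.tan ω * |z.re| ≤ Real.tan ω * (|r| + 1) :=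
        mul_le_mul_of_nonneg_left h1 htanω
      linarith
    have h3 : ‖z‖ ≤ ρ := by
      have := Complex.norm_le_abs_re_add_abs_im z
      rw [hρ]
      linarith
    have hzF : z ∈ Fset := ⟨by rw [Metric.mem_closedBall, dist_zero_right]; exact h3, hz⟩
    have hmin : δ ≤ |z.re - r| := Finset.min'_le _ _ (by
      rw [Set.Finite.mem_toFinset]
      exact Set.mem_insert_of_mem _ ⟨z, hzF, rfl⟩)
    linarith
  obtain ⟨ε, hε, hstrip⟩ := hstripex
  -- choice of ω'
  set tq : ℝ := Real.tan ω * (1 + |r| / ε) + R₀ / ε with htq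
  have htq0 : 0 ≤ tq := by positivity
  set ω' : ℝ := Real.arctan (tq + 1) with hω'def
  have hω'1 : 0 < ω' := by
    rw [hω'def]
    have h := Real.arctan_strictMono (show (0 : ℝ) < tq + 1 by linarith)
    rwa [Real.arctan_zero] at h
  have hω'2 : ω' < π / 2 := Real.arctan_lt_pi_div_two _
  have htanω' : Real.tan ω' = tq + 1 := Real.tan_arctan _
  have htanωtq : Real.tan ω ≤ tq := by
    have h1 : 0 ≤ Real.tan ω * (|r| / ε) :=
      mul_nonneg htanω (div_nonneg (abs_nonneg r) hε.le)
    have h2 : 0 ≤ R₀ / ε := div_nonneg hR₀.le hε.le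
    rw [htq]
    nlinarith [h1, h2]
  -- the main spectral claim
  have hclaim : ∀ ζ : ℂ, (¬ ∃ R, IsResolventAt T ζ R) →
      (ζ - (r : ℂ)) ∈ closure (Bisector ω') ∧ ε < |(ζ - (r : ℂ)).re| := by
    intro ζ hζ
    have hre : (ζ - (r : ℂ)).re = ζ.re - r := by simp
    have him' : (ζ - (r : ℂ)).im = ζ.im := by simp
    have h2 : ε < |ζ.re - r| := hstrip ζ hζ
    have him : |ζ.im| ≤ Real.tan ω * |ζ.re| + R₀ := hspecIm ζ hζ
    have ha1 : |ζ.re| ≤ |ζ.re - r| + |r| := by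
      calc |ζ.re| = |(ζ.re - r) + r| := by rw [sub_add_cancel]
        _ ≤ |ζ.re - r| + |r| := abs_add_le _ _
    have hkey : |ζ.im| ≤ tq * |ζ.re - r| := by
      have h4 : Real.tan ω * |ζ.re| ≤ Real.tan ω * (|ζ.re - r| + |r|) :=
        mul_le_mul_of_nonneg_left ha1 htanω
      have hte : tq * ε = Real.tan ω * ε + Real.tan ω * |r| + R₀ := by
        rw [htq]
        field_simp
      have h6 : 0 ≤ (tq - Real.tan ω) * (|ζ.re - r| - ε) :=
        mul_nonneg (by linarith) (by linarith)
      nlinarith [h6, h4, hte, him]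
    have hapos : 0 < |ζ.re - r| := lt_trans hε h2
    have hstrict : |(ζ - (r : ℂ)).im| < Real.tan ω' * |(ζ - (r : ℂ)).re| := by
      rw [him', hre, htanω']
      nlinarith [hkey, hapos]
    refine ⟨subset_closure ?_, by rwa [hre]⟩
    rw [bisector_eq hω'1.le hω'2]
    refine ⟨?_, hstrict⟩
    rw [hre]
    exact abs_pos.mp hapos
  refine ⟨hline (r : ℂ) (Complex.ofReal_re r), ω', ⟨hω'1, hω'2⟩, ε, hε, hclaim, ?_⟩
  intro μ hμ
  obtain ⟨hμ1, hμ2⟩ := hμ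
  have hμ0 : 0 < μ := lt_trans hω'1 hμ1
  have htanμ : Real.tan ω' < Real.tan μ :=
    Real.tan_lt_tan_of_nonneg_of_lt_pi_div_two hω'1.le hμ2 hμ1
  have htanμ0 : 0 < Real.tan μ := Real.tan_pos_of_pos_of_lt_pi_div_two hμ0 hμ2
  have htanωμ : Real.tan ω < Real.tan μ := by
    rw [htanω'] at htanμ
    linarith
  have hd0 : 0 < Real.tan μ - Real.tan ω := by linarith
  set a₀ : ℝ := Real.tan ω * |r| / (Real.tan μ - Real.tan ω) with ha₀
  have ha₀0 : 0 ≤ a₀ := by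
    rw [ha₀]
    exact div_nonneg (mul_nonneg htanω (abs_nonneg r)) hd0.le
  set R₁ : ℝ := max (R₀ + |r|)
      (max (2 * |r| + 1) (a₀ + Real.tan ω * (a₀ + |r|) + 1)) with hR₁
  have hR₁a : R₀ + |r| ≤ R₁ := le_max_left _ _
  have hR₁b : 2 * |r| + 1 ≤ R₁ := le_trans (le_max_left _ _) (le_max_right _ _)
  have hR₁c : a₀ + Real.tan ω * (a₀ + |r|) + 1 ≤ R₁ :=
    le_trans (le_max_right _ _) (le_max_right _ _)
  have hR₁0 : 0 < R₁ := lt_of_lt_of_le (show (0:ℝ) < 2 * |r| + 1 by positivity) hR₁b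
  have houtside : ∀ ζ : ℂ, ζ ∉ closure (Bisector μ) → Real.tan μ * |ζ.re| < |ζ.im| := by
    intro ζ hζ
    by_contra hc
    push_neg at hc
    exact hζ (mem_closure_bisector hμ0 hμ2 hc)
  have hout : ∀ ζ : ℂ, ζ ∉ closure (Bisector μ) → R₁ < ‖ζ‖ →
      (ζ + (r : ℂ)) ∉ Bisector ω ∪ Metric.closedBall 0 R₀ := by
    intro ζ hζ hbig hmem
    have hb := houtside ζ hζ
    have hnorm1 : ‖ζ‖ ≤ ‖ζ + (r : ℂ)‖ + |r| := by
      have h := norm_sub_le (ζ + (r : ℂ)) (r : ℂ)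
      rw [add_sub_cancel_right, Complex.norm_real, Real.norm_eq_abs] at h
      linarith
    rcases hmem with hmem | hmem
    · rw [bisector_eq hω0 hω2] at hmem
      obtain ⟨-, him⟩ := hmem
      have hre1 : (ζ + (r : ℂ)).re = ζ.re + r := by simp
      have him1 : (ζ + (r : ℂ)).im = ζ.im := by simp
      rw [hre1, him1] at him
      have h1 : |ζ.re + r| ≤ |ζ.re| + |r| := abs_add_le _ _
      have h2 : |ζ.im| < Real.tan ω * (|ζ.re| + |r|) :=
        lt_of_lt_of_le him (mul_le_mul_of_nonneg_left h1 htanω)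
      have h3 : (Real.tan μ - Real.tan ω) * |ζ.re| < Real.tan ω * |r| := by
        have hx : Real.tan μ * |ζ.re| < Real.tan ω * |ζ.re| + Real.tan ω * |r| := by
          calc Real.tan μ * |ζ.re| < |ζ.im| := hb
            _ < Real.tan ω * (|ζ.re| + |r|) := h2
            _ = Real.tan ω * |ζ.re| + Real.tan ω * |r| := by ring
        linarith [hx]
      have h4 : |ζ.re| < a₀ := by
        rw [ha₀, lt_div_iff₀ hd0]
        linarith [h3]
      have h5 : |ζ.im| < Real.tan ω * (a₀ + |r|) :=
        lt_of_lt_of_le h2 (mul_le_mul_of_nonneg_left (by linarith) htanω)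
      have h6 : ‖ζ‖ ≤ |ζ.re| + |ζ.im| := by
        exact Complex.norm_le_abs_re_add_abs_im ζ
      linarith
    · rw [Metric.mem_closedBall, dist_zero_right] at hmem
      linarith
  have hexists : ∀ ζ : ℂ, ζ ∉ closure (Bisector μ) →
      ∃ R, IsResolventAt T (ζ + (r : ℂ)) R := by
    intro ζ hζ
    by_contra hcon
    obtain ⟨hmem, -⟩ := hclaim (ζ + (r : ℂ)) hcon
    rw [add_sub_cancel_right] at hmem
    apply hζ
    refine closure_mono ?_ hmem
    intro z hz
    exact ⟨hz.1, hz.2.imp (fun h => lt_of_lt_of_le h hμ1.le)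
      (fun h => lt_of_lt_of_le h hμ1.le)⟩
  set Kset : Set ℂ := Metric.closedBall (0 : ℂ) R₁ \ Bisector μ with hKset
  have hKcomp : IsCompact Kset :=
    (isCompact_closedBall _ _).diff (bisector_isOpen hμ0.le hμ2)
  have hKres : ∀ z ∈ Kset, ∃ R, IsResolventAt T (z + (r : ℂ)) R := by
    intro z hz
    by_contra hcon
    obtain ⟨hmem, hre⟩ := hclaim (z + (r : ℂ)) hcon
    rw [add_sub_cancel_right] at hmem hre
    apply hz.2
    rw [bisector_eq hμ0.le hμ2]
    have h1 : |z.im| ≤ Real.tan ω' * |z.re| := closure_bisector_subset hω'1.le hω'2 hmem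
    have h2 : 0 < |z.re| := lt_trans hε hre
    refine ⟨abs_pos.mp h2, ?_⟩
    calc |z.im| ≤ Real.tan ω' * |z.re| := h1
      _ < Real.tan μ * |z.re| := mul_lt_mul_of_pos_right htanμ h2
  obtain ⟨M, hM⟩ := compact_bound T (r : ℂ) Kset hKcomp hKres
  refine ⟨max (2 * max C 0) (max (R₁ * M) 0), ?_⟩
  intro ζ hζ
  have hζ0 : ζ ≠ 0 := by
    intro h
    apply hζ
    rw [h]
    exact mem_closure_bisector hμ0 hμ2 (by simp)
  have hζn : 0 < ‖ζ‖ := norm_pos_iff.mpr hζ0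
  rcases le_or_gt ‖ζ‖ R₁ with hle | hlt
  · have hzK : ζ ∈ Kset := ⟨by rw [Metric.mem_closedBall, dist_zero_right]; exact hle,
      fun h => hζ (subset_closure h)⟩
    obtain ⟨R, hR, hRM⟩ := hM ζ hzK
    refine ⟨R, hR, ?_⟩
    have hM0 : 0 ≤ M := le_trans (norm_nonneg R) hRM
    rw [le_div_iff₀ hζn]
    calc ‖R‖ * ‖ζ‖ ≤ M * R₁ := mul_le_mul hRM hle hζn.le hM0
      _ = R₁ * M := mul_comm _ _
      _ ≤ max (2 * max C 0) (max (R₁ * M) 0) :=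
          le_trans (le_max_left _ _) (le_max_right _ _)
  · obtain ⟨R, hR⟩ := hexists ζ hζ
    refine ⟨R, hR, ?_⟩
    have hC := hres (ζ + (r : ℂ)) (hout ζ hζ hlt) R hR
    have hnorm1 : ‖ζ‖ ≤ ‖ζ + (r : ℂ)‖ + |r| := by
      have h := norm_sub_le (ζ + (r : ℂ)) (r : ℂ)
      rw [add_sub_cancel_right, Complex.norm_real, Real.norm_eq_abs] at h
      linarith
    have hhalf : ‖ζ‖ / 2 ≤ ‖ζ + (r : ℂ)‖ := by
      have h0 : 0 ≤ |r| := abs_nonneg r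
      linarith
    have hpos : 0 < ‖ζ + (r : ℂ)‖ := lt_of_lt_of_le (by linarith) hhalf
    calc ‖R‖ ≤ C / ‖ζ + (r : ℂ)‖ := hC
      _ ≤ max C 0 / ‖ζ + (r : ℂ)‖ := (div_le_div_iff_of_pos_right hpos).mpr (le_max_left C 0)
      _ ≤ max C 0 / (‖ζ‖ / 2) := by
          apply div_le_div_of_nonneg_left (le_max_right C 0) (by linarith) hhalf
      _ = 2 * max C 0 / ‖ζ‖ := by
          rw [div_div_eq_mul_div]
          ring
      _ ≤ max (2 * max C 0) (max (R₁ * M) 0) / ‖ζ‖ :=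
          (div_le_div_iff_of_pos_right hζn).mpr (le_max_left _ _)
end
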